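/- Let f : ℝ³ → ℝ be smooth and compactly supported, let u ∈ ℝ and θ ∈ ℝ, and set ū := (u, 0, 0) ∈ ℝ³. Define g₁(s) := ∫_{ℝ²} f(s, v_y, v_z) dv_y dv_z and g₂(s) := ∫_{ℝ²} (v_y² + v_z²) f(s, v_y, v_z) dv_y dv_z. Then for every s ∈ ℝ, ∫_{ℝ²} (v_y² + v_z²) [ ∇_v · ( (v − ū) f(v) + θ ∇_v f(v) ) ]_{v=(s,v_y,v_z)} dv_y dv_z = d/ds ( (s − u) g₂(s) + θ g₂′(s) ) + 4 θ g₁(s) − 2 g₂(s). -/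

import Mathlib

open MeasureTheory

noncomputable section

/-- Partial derivative in the first velocity coordinate. -/
def D1 (f : ℝ × ℝ × ℝ → ℝ) (v : ℝ × ℝ × ℝ) : ℝ :=
  deriv (fun s => f (s, v.2.1, v.2.2)) v.1

/-- Partial derivative in the second velocity coordinate. -/
def D2 (f : ℝ × ℝ × ℝ → ℝ) (v : ℝ × ℝ × ℝ) : ℝ :=
  deriv (fun s => f (v.1, s, v.2.2)) v.2.1

/-- Partial derivative in the third velocity coordinate. -/
def D3 (f : ℝ × ℝ × ℝ → ℝ) (v : ℝ × ℝ × ℝ) : ℝ :=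
  deriv (fun s => f (v.1, v.2.1, s)) v.2.2

/-- The divergence `∇_v · ((v − ū) f + θ ∇_v f)` of the Lenard–Bernstein flux with bulk
velocity `ū = (u, 0, 0)` and temperature `θ`. -/
def lbDiv (f : ℝ × ℝ × ℝ → ℝ) (u θ : ℝ) (v : ℝ × ℝ × ℝ) : ℝ :=
  D1 (fun w => (w.1 - u) * f w + θ * D1 f w) v
    + D2 (fun w => w.2.1 * f w + θ * D2 f w) v
    + D3 (fun w => w.2.2 * f w + θ * D3 f w) v

namespace ChuAux

variable {G H : ℝ × ℝ × ℝ → ℝ}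

lemma sliceD1 (hG : Differentiable ℝ G) (x y z : ℝ) :
    HasDerivAt (fun t => G (t, y, z)) (D1 G (x, y, z)) x := by
  have h : DifferentiableAt ℝ (fun t : ℝ => G (t, y, z)) x :=
    (hG (x, y, z)).comp x (differentiableAt_id.prodMk (differentiableAt_const _))
  exact h.hasDerivAt

lemma sliceD2 (hG : Differentiable ℝ G) (x y z : ℝ) :
    HasDerivAt (fun t => G (x, t, z)) (D2 G (x, y, z)) y := by
  have h : DifferentiableAt ℝ (fun t : ℝ => G (x, t, z)) y :=
    (hG (x, y, z)).comp y ((differentiableAt_const _).prodMk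
      (differentiableAt_id.prodMk (differentiableAt_const _)))
  exact h.hasDerivAt

lemma sliceD3 (hG : Differentiable ℝ G) (x y z : ℝ) :
    HasDerivAt (fun t => G (x, y, t)) (D3 G (x, y, z)) z := by
  have h : DifferentiableAt ℝ (fun t : ℝ => G (x, y, t)) z :=
    (hG (x, y, z)).comp z ((differentiableAt_const _).prodMk
      ((differentiableAt_const _).prodMk differentiableAt_id))
  exact h.hasDerivAt

lemma D1_eq (hG : Differentiable ℝ G) (v : ℝ × ℝ × ℝ) :
    D1 G v = fderiv ℝ G v ((1 : ℝ), (0 : ℝ), (0 : ℝ)) := by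
  have hL : HasDerivAt (fun s : ℝ => (s, v.2.1, v.2.2)) ((1 : ℝ), (0 : ℝ), (0 : ℝ)) v.1 :=
    (hasDerivAt_id v.1).prodMk ((hasDerivAt_const _ _).prodMk (hasDerivAt_const _ _))
  have := ((hG (v.1, v.2.1, v.2.2)).hasFDerivAt.comp_hasDerivAt v.1 hL)
  exact this.deriv

lemma D2_eq (hG : Differentiable ℝ G) (v : ℝ × ℝ × ℝ) :
    D2 G v = fderiv ℝ G v ((0 : ℝ), (1 : ℝ), (0 : ℝ)) := by
  have hL : HasDerivAt (fun s : ℝ => (v.1, s, v.2.2)) ((0 : ℝ), (1 : ℝ), (0 : ℝ)) v.2.1 :=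
    (hasDerivAt_const _ _).prodMk ((hasDerivAt_id _).prodMk (hasDerivAt_const _ _))
  have := ((hG (v.1, v.2.1, v.2.2)).hasFDerivAt.comp_hasDerivAt v.2.1 hL)
  exact this.deriv

lemma D3_eq (hG : Differentiable ℝ G) (v : ℝ × ℝ × ℝ) :
    D3 G v = fderiv ℝ G v ((0 : ℝ), (0 : ℝ), (1 : ℝ)) := by
  have hL : HasDerivAt (fun s : ℝ => (v.1, v.2.1, s)) ((0 : ℝ), (0 : ℝ), (1 : ℝ)) v.2.2 :=
    (hasDerivAt_const _ _).prodMk ((hasDerivAt_const _ _).prodMk (hasDerivAt_id _))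
  have := ((hG (v.1, v.2.1, v.2.2)).hasFDerivAt.comp_hasDerivAt v.2.2 hL)
  exact this.deriv

lemma contDiff_D (hG : ContDiff ℝ (⊤ : ℕ∞) G) (e : ℝ × ℝ × ℝ) :
    ContDiff ℝ (⊤ : ℕ∞) (fun v => fderiv ℝ G v e) :=
  (hG.fderiv_right (by simp)).clm_apply contDiff_const

lemma cs_D (hs : HasCompactSupport G) (e : ℝ × ℝ × ℝ) :
    HasCompactSupport (fun v => fderiv ℝ G v e) :=
  hs.fderiv_apply ℝ e

lemma contDiff_D1 (hG : ContDiff ℝ (⊤ : ℕ∞) G) : ContDiff ℝ (⊤ : ℕ∞) (D1 G) := by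
  have : D1 G = fun v => fderiv ℝ G v ((1 : ℝ), (0 : ℝ), (0 : ℝ)) :=
    funext (D1_eq (hG.differentiable (by simp)))
  rw [this]; exact contDiff_D hG _

lemma contDiff_D2 (hG : ContDiff ℝ (⊤ : ℕ∞) G) : ContDiff ℝ (⊤ : ℕ∞) (D2 G) := by
  have : D2 G = fun v => fderiv ℝ G v ((0 : ℝ), (1 : ℝ), (0 : ℝ)) :=
    funext (D2_eq (hG.differentiable (by simp)))
  rw [this]; exact contDiff_D hG _

lemma contDiff_D3 (hG : ContDiff ℝ (⊤ : ℕ∞) G) : ContDiff ℝ (⊤ : ℕ∞) (D3 G) := by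
  have : D3 G = fun v => fderiv ℝ G v ((0 : ℝ), (0 : ℝ), (1 : ℝ)) :=
    funext (D3_eq (hG.differentiable (by simp)))
  rw [this]; exact contDiff_D hG _

lemma cs_D1 (hG : Differentiable ℝ G) (hs : HasCompactSupport G) :
    HasCompactSupport (D1 G) := by
  have : D1 G = fun v => fderiv ℝ G v ((1 : ℝ), (0 : ℝ), (0 : ℝ)) := funext (D1_eq hG)
  rw [this]; exact cs_D hs _

lemma cs_D2 (hG : Differentiable ℝ G) (hs : HasCompactSupport G) :
    HasCompactSupport (D2 G) := by
  have : D2 G = fun v => fderiv ℝ G v ((0 : ℝ), (1 : ℝ), (0 : ℝ)) := funext (D2_eq hG)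
  rw [this]; exact cs_D hs _

lemma cs_D3 (hG : Differentiable ℝ G) (hs : HasCompactSupport G) :
    HasCompactSupport (D3 G) := by
  have : D3 G = fun v => fderiv ℝ G v ((0 : ℝ), (0 : ℝ), (1 : ℝ)) := funext (D3_eq hG)
  rw [this]; exact cs_D hs _

lemma slice_cs (hs : HasCompactSupport G) (s : ℝ) :
    HasCompactSupport (fun p : ℝ × ℝ => G (s, p.1, p.2)) := by
  apply HasCompactSupport.intro (hs.image continuous_snd)
  intro p hp
  by_contra h
  exact hp ⟨(s, p.1, p.2), subset_tsupport _ h, rfl⟩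

lemma slice_cont (hG : Continuous G) (s : ℝ) :
    Continuous (fun p : ℝ × ℝ => G (s, p.1, p.2)) :=
  hG.comp (continuous_const.prodMk (continuous_fst.prodMk continuous_snd))

lemma slice_int (hG : Continuous G) (hs : HasCompactSupport G) (s : ℝ) :
    Integrable (fun p : ℝ × ℝ => G (s, p.1, p.2)) :=
  (slice_cont hG s).integrable_of_hasCompactSupport (slice_cs hs s)

lemma int_wt {c : ℝ × ℝ → ℝ} (hc : Continuous c)
    (hG : Continuous G) (hs : HasCompactSupport G) (s : ℝ) :
    Integrable (fun p : ℝ × ℝ => c p * G (s, p.1, p.2)) :=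
  (hc.mul (slice_cont hG s)).integrable_of_hasCompactSupport
    ((slice_cs hs s).mul_left)

lemma slice2_cs (hs : HasCompactSupport G) (s z : ℝ) :
    HasCompactSupport (fun y : ℝ => G (s, y, z)) := by
  apply HasCompactSupport.intro (hs.image (continuous_fst.comp continuous_snd))
  intro y hy
  by_contra h
  exact hy ⟨(s, y, z), subset_tsupport _ h, rfl⟩

lemma slice3_cs (hs : HasCompactSupport G) (s y : ℝ) :
    HasCompactSupport (fun z : ℝ => G (s, y, z)) := by
  apply HasCompactSupport.intro (hs.image (continuous_snd.comp continuous_snd))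
  intro z hz
  by_contra h
  exact hz ⟨(s, y, z), subset_tsupport _ h, rfl⟩

lemma slice2_contDiff (hG : ContDiff ℝ (⊤ : ℕ∞) G) (s z : ℝ) :
    ContDiff ℝ (⊤ : ℕ∞) (fun y : ℝ => G (s, y, z)) :=
  hG.comp (contDiff_const.prodMk (contDiff_id.prodMk contDiff_const))

lemma slice3_contDiff (hG : ContDiff ℝ (⊤ : ℕ∞) G) (s y : ℝ) :
    ContDiff ℝ (⊤ : ℕ∞) (fun z : ℝ => G (s, y, z)) :=
  hG.comp (contDiff_const.prodMk (contDiff_const.prodMk contDiff_id))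

lemma integral_deriv_zero {g : ℝ → ℝ} (h1 : ContDiff ℝ 1 g) (h2 : HasCompactSupport g) :
    ∫ x : ℝ, deriv g x = 0 := by
  have hcont : Continuous (deriv g) := h1.continuous_deriv le_rfl
  have hcs : HasCompactSupport (deriv g) := h2.deriv
  have hint : Integrable (deriv g) := hcont.integrable_of_hasCompactSupport hcs
  have hIic := h2.integral_Iic_deriv_eq h1 0
  have hIoi := h2.integral_Ioi_deriv_eq h1 0
  rw [← intervalIntegral.integral_Iic_add_Ioi hint.integrableOn hint.integrableOn, hIic, hIoi]
  ring

lemma hasDerivAt_marginal (hG : ContDiff ℝ (⊤ : ℕ∞) G) (hs : HasCompactSupport G) (s : ℝ) :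
    HasDerivAt (fun t : ℝ => ∫ p : ℝ × ℝ, G (t, p.1, p.2))
      (∫ p : ℝ × ℝ, D1 G (s, p.1, p.2)) s := by
  have hGc : Continuous G := hG.continuous
  have hD1c : Continuous (D1 G) := (contDiff_D1 hG).continuous
  have hD1s : HasCompactSupport (D1 G) := cs_D1 (hG.differentiable (by simp)) hs
  obtain ⟨C, hC⟩ := hD1s.exists_bound_of_continuous hD1c
  obtain ⟨R, hR⟩ := hD1s.isBounded.subset_closedBall 0
  set bound : ℝ × ℝ → ℝ := Set.indicator (Metric.closedBall (0 : ℝ × ℝ) R) (fun _ => C)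
    with hbound
  refine (hasDerivAt_integral_of_dominated_loc_of_deriv_le (s := Metric.ball s 1) (bound := bound) (Metric.ball_mem_nhds s one_pos)
    (Filter.Eventually.of_forall fun x => (slice_cont hGc x).aestronglyMeasurable)
    (slice_int hGc hs s)
    (F' := fun t p => D1 G (t, p.1, p.2))
    ((slice_cont hD1c s).aestronglyMeasurable)
    (Filter.Eventually.of_forall ?_) ?_ (Filter.Eventually.of_forall ?_)).2
  · intro p x _
    by_cases hp : p ∈ Metric.closedBall (0 : ℝ × ℝ) R
    · simp only [hbound, Set.indicator_of_mem hp]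
      exact hC _
    · have h0 : D1 G (x, p.1, p.2) = 0 := by
        apply image_eq_zero_of_notMem_tsupport
        intro hmem
        apply hp
        have h1 : (x, p.1, p.2) ∈ Metric.closedBall (0 : ℝ × ℝ × ℝ) R := hR hmem
        rw [mem_closedBall_zero_iff] at h1 ⊢
        calc ‖p‖ = ‖(x, p.1, p.2).2‖ := rfl
          _ ≤ ‖(x, p.1, p.2)‖ := norm_snd_le _
          _ ≤ R := h1
      simp only [hbound, Set.indicator_of_notMem hp]
      simp only [h0, norm_zero, le_refl]
  · exact ((integrable_indicator_iff measurableSet_closedBall).2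
      (integrableOn_const measure_closedBall_lt_top.ne))
  · intro p x _
    exact sliceD1 (hG.differentiable (by simp)) x p.1 p.2

lemma integral_D2_zero (hG : ContDiff ℝ (⊤ : ℕ∞) G) (hs : HasCompactSupport G) (s : ℝ) :
    ∫ p : ℝ × ℝ, D2 G (s, p.1, p.2) = 0 := by
  have hint : Integrable (fun p : ℝ × ℝ => D2 G (s, p.1, p.2)) :=
    slice_int (contDiff_D2 hG).continuous (cs_D2 (hG.differentiable (by simp)) hs) s
  rw [Measure.volume_eq_prod] at hint ⊢
  rw [MeasureTheory.integral_prod_symm _ hint]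
  have hz : ∀ z : ℝ, (∫ y : ℝ, D2 G (s, y, z)) = 0 := by
    intro z
    have h1 : ContDiff ℝ 1 (fun y : ℝ => G (s, y, z)) := (slice2_contDiff hG s z).of_le (by simp)
    have h2 := slice2_cs hs s z
    have he : (fun y : ℝ => D2 G (s, y, z)) = fun y => deriv (fun t => G (s, t, z)) y := rfl
    calc (∫ y : ℝ, D2 G (s, y, z)) = ∫ y : ℝ, deriv (fun t => G (s, t, z)) y := by rw [he]
      _ = 0 := integral_deriv_zero h1 h2
  simp only [hz, integral_zero]

lemma integral_D3_zero (hG : ContDiff ℝ (⊤ : ℕ∞) G) (hs : HasCompactSupport G) (s : ℝ) :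
    ∫ p : ℝ × ℝ, D3 G (s, p.1, p.2) = 0 := by
  have hint : Integrable (fun p : ℝ × ℝ => D3 G (s, p.1, p.2)) :=
    slice_int (contDiff_D3 hG).continuous (cs_D3 (hG.differentiable (by simp)) hs) s
  rw [Measure.volume_eq_prod] at hint ⊢
  rw [MeasureTheory.integral_prod _ hint]
  have hy : ∀ y : ℝ, (∫ z : ℝ, D3 G (s, y, z)) = 0 := by
    intro y
    have h1 : ContDiff ℝ 1 (fun z : ℝ => G (s, y, z)) := (slice3_contDiff hG s y).of_le (by simp)
    have h2 := slice3_cs hs s y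
    have he : (fun z : ℝ => D3 G (s, y, z)) = fun z => deriv (fun t => G (s, y, t)) z := rfl
    calc (∫ z : ℝ, D3 G (s, y, z)) = ∫ z : ℝ, deriv (fun t => G (s, y, t)) z := by rw [he]
      _ = 0 := integral_deriv_zero h1 h2
  simp only [hy, integral_zero]

/-- The first coordinate derivative of a product with a weight not depending on the
first coordinate. -/
lemma D1_W_mul (H : ℝ × ℝ × ℝ → ℝ) (v : ℝ × ℝ × ℝ) :
    D1 (fun w => (w.2.1 ^ 2 + w.2.2 ^ 2) * H w) v
      = (v.2.1 ^ 2 + v.2.2 ^ 2) * D1 H v := by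
  show deriv (fun t => (v.2.1 ^ 2 + v.2.2 ^ 2) * H (t, v.2.1, v.2.2)) v.1
      = (v.2.1 ^ 2 + v.2.2 ^ 2) * deriv (fun t => H (t, v.2.1, v.2.2)) v.1
  exact deriv_const_mul_field _

lemma D2_W_mul (hH : Differentiable ℝ H) (v : ℝ × ℝ × ℝ) :
    D2 (fun w => (w.2.1 ^ 2 + w.2.2 ^ 2) * H w) v
      = 2 * v.2.1 * H v + (v.2.1 ^ 2 + v.2.2 ^ 2) * D2 H v := by
  have h1 : HasDerivAt (fun t : ℝ => t ^ 2 + v.2.2 ^ 2) (2 * v.2.1) v.2.1 := by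
    simpa using (hasDerivAt_pow 2 v.2.1).add_const (v.2.2 ^ 2)
  have h2 : HasDerivAt (fun t : ℝ => H (v.1, t, v.2.2)) (D2 H v) v.2.1 :=
    sliceD2 hH v.1 v.2.1 v.2.2
  exact (h1.mul h2).deriv

lemma D3_W_mul (hH : Differentiable ℝ H) (v : ℝ × ℝ × ℝ) :
    D3 (fun w => (w.2.1 ^ 2 + w.2.2 ^ 2) * H w) v
      = 2 * v.2.2 * H v + (v.2.1 ^ 2 + v.2.2 ^ 2) * D3 H v := by
  have h1 : HasDerivAt (fun t : ℝ => v.2.1 ^ 2 + t ^ 2) (2 * v.2.2) v.2.2 := by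
    simpa using (hasDerivAt_pow 2 v.2.2).const_add (v.2.1 ^ 2)
  have h2 : HasDerivAt (fun t : ℝ => H (v.1, v.2.1, t)) (D3 H v) v.2.2 :=
    sliceD3 hH v.1 v.2.1 v.2.2
  exact (h1.mul h2).deriv

lemma D2_y_mul (hH : Differentiable ℝ H) (v : ℝ × ℝ × ℝ) :
    D2 (fun w => w.2.1 * H w) v = H v + v.2.1 * D2 H v := by
  have h1 : HasDerivAt (fun t : ℝ => t) 1 v.2.1 := hasDerivAt_id _
  have h2 : HasDerivAt (fun t : ℝ => H (v.1, t, v.2.2)) (D2 H v) v.2.1 :=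
    sliceD2 hH v.1 v.2.1 v.2.2
  have h3 := (h1.mul h2).deriv
  rw [one_mul] at h3
  exact h3

lemma D3_z_mul (hH : Differentiable ℝ H) (v : ℝ × ℝ × ℝ) :
    D3 (fun w => w.2.2 * H w) v = H v + v.2.2 * D3 H v := by
  have h1 : HasDerivAt (fun t : ℝ => t) 1 v.2.2 := hasDerivAt_id _
  have h2 : HasDerivAt (fun t : ℝ => H (v.1, v.2.1, t)) (D3 H v) v.2.2 :=
    sliceD3 hH v.1 v.2.1 v.2.2
  have h3 := (h1.mul h2).deriv
  rw [one_mul] at h3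
  exact h3

lemma D1_W_mul' (H : ℝ × ℝ × ℝ → ℝ) (x y z : ℝ) :
    D1 (fun w => (w.2.1 ^ 2 + w.2.2 ^ 2) * H w) (x, y, z)
      = (y ^ 2 + z ^ 2) * D1 H (x, y, z) := D1_W_mul H (x, y, z)

lemma D2_W_mul' (hH : Differentiable ℝ H) (x y z : ℝ) :
    D2 (fun w => (w.2.1 ^ 2 + w.2.2 ^ 2) * H w) (x, y, z)
      = 2 * y * H (x, y, z) + (y ^ 2 + z ^ 2) * D2 H (x, y, z) := D2_W_mul hH (x, y, z)

lemma D3_W_mul' (hH : Differentiable ℝ H) (x y z : ℝ) :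
    D3 (fun w => (w.2.1 ^ 2 + w.2.2 ^ 2) * H w) (x, y, z)
      = 2 * z * H (x, y, z) + (y ^ 2 + z ^ 2) * D3 H (x, y, z) := D3_W_mul hH (x, y, z)

lemma D2_y_mul' (hH : Differentiable ℝ H) (x y z : ℝ) :
    D2 (fun w => w.2.1 * H w) (x, y, z) = H (x, y, z) + y * D2 H (x, y, z) :=
  D2_y_mul hH (x, y, z)

lemma D3_z_mul' (hH : Differentiable ℝ H) (x y z : ℝ) :
    D3 (fun w => w.2.2 * H w) (x, y, z) = H (x, y, z) + z * D3 H (x, y, z) :=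
  D3_z_mul hH (x, y, z)

lemma cs_mul {α : Type*} [TopologicalSpace α] {g h : α → ℝ} (hh : HasCompactSupport h) :
    HasCompactSupport (fun x => g x * h x) := hh.mul_left

lemma cs_add {α : Type*} [TopologicalSpace α] {g h : α → ℝ} (hg : HasCompactSupport g)
    (hh : HasCompactSupport h) : HasCompactSupport (fun x => g x + h x) := hg.add hh

end ChuAux

/-- Chu reduction of the Lenard–Bernstein collision term for the second
transverse moment: `∫ (v_y²+v_z²) ∇_v·((v−ū)f + θ∇_v f) dv_y dv_z
= d/ds ((s−u)g₂ + θ g₂′) + 4θ g₁ − 2 g₂`. -/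
theorem chu_reduction_collision_g2
    (f : ℝ × ℝ × ℝ → ℝ) (hf : ContDiff ℝ (⊤ : ℕ∞) f) (hsupp : HasCompactSupport f)
    (u θ : ℝ) (g₁ g₂ : ℝ → ℝ)
    (hg₁ : ∀ s : ℝ, g₁ s = ∫ p : ℝ × ℝ, f (s, p.1, p.2))
    (hg₂ : ∀ s : ℝ, g₂ s = ∫ p : ℝ × ℝ, (p.1 ^ 2 + p.2 ^ 2) * f (s, p.1, p.2)) :
    ∀ s : ℝ,
      (∫ p : ℝ × ℝ, (p.1 ^ 2 + p.2 ^ 2) * lbDiv f u θ (s, p.1, p.2)) =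
        deriv (fun t => (t - u) * g₂ t + θ * deriv g₂ t) s
          + 4 * θ * g₁ s - 2 * g₂ s := by
  intro s
  classical
  have hfd : Differentiable ℝ f := hf.differentiable (by simp)
  have hfc : Continuous f := hf.continuous
  have hWc3 : ContDiff ℝ (⊤ : ℕ∞) (fun w : ℝ × ℝ × ℝ => w.2.1 ^ 2 + w.2.2 ^ 2) := by fun_prop
  have hWc : Continuous (fun p : ℝ × ℝ => p.1 ^ 2 + p.2 ^ 2) := by fun_prop
  have hD1fc : ContDiff ℝ (⊤ : ℕ∞) (D1 f) := ChuAux.contDiff_D1 hf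
  have hD2fc : ContDiff ℝ (⊤ : ℕ∞) (D2 f) := ChuAux.contDiff_D2 hf
  have hD3fc : ContDiff ℝ (⊤ : ℕ∞) (D3 f) := ChuAux.contDiff_D3 hf
  have hD1fs : HasCompactSupport (D1 f) := ChuAux.cs_D1 hfd hsupp
  have hD2fs : HasCompactSupport (D2 f) := ChuAux.cs_D2 hfd hsupp
  have hD3fs : HasCompactSupport (D3 f) := ChuAux.cs_D3 hfd hsupp
  set F₁ : ℝ × ℝ × ℝ → ℝ := fun w => (w.1 - u) * f w + θ * D1 f w with hF₁def
  set F₂ : ℝ × ℝ × ℝ → ℝ := fun w => w.2.1 * f w + θ * D2 f w with hF₂def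
  set F₃ : ℝ × ℝ × ℝ → ℝ := fun w => w.2.2 * f w + θ * D3 f w with hF₃def
  have hF₁c : ContDiff ℝ (⊤ : ℕ∞) F₁ := by
    rw [hF₁def]
    exact ((contDiff_fst.sub contDiff_const).mul hf).add (contDiff_const.mul hD1fc)
  have hF₂c : ContDiff ℝ (⊤ : ℕ∞) F₂ := by
    rw [hF₂def]
    exact ((contDiff_fst.comp contDiff_snd).mul hf).add (contDiff_const.mul hD2fc)
  have hF₃c : ContDiff ℝ (⊤ : ℕ∞) F₃ := by
    rw [hF₃def]
    exact ((contDiff_snd.comp contDiff_snd).mul hf).add (contDiff_const.mul hD3fc)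
  have hF₁s : HasCompactSupport F₁ := by
    rw [hF₁def]; exact ChuAux.cs_add (ChuAux.cs_mul hsupp) (ChuAux.cs_mul hD1fs)
  have hF₂s : HasCompactSupport F₂ := by
    rw [hF₂def]; exact ChuAux.cs_add (ChuAux.cs_mul hsupp) (ChuAux.cs_mul hD2fs)
  have hF₃s : HasCompactSupport F₃ := by
    rw [hF₃def]; exact ChuAux.cs_add (ChuAux.cs_mul hsupp) (ChuAux.cs_mul hD3fs)
  have hF₁d : Differentiable ℝ F₁ := hF₁c.differentiable (by simp)
  have hF₂d : Differentiable ℝ F₂ := hF₂c.differentiable (by simp)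
  have hF₃d : Differentiable ℝ F₃ := hF₃c.differentiable (by simp)
  -- weighted products
  set Wf : ℝ × ℝ × ℝ → ℝ := fun w => (w.2.1 ^ 2 + w.2.2 ^ 2) * f w with hWfdef
  set WF₁ : ℝ × ℝ × ℝ → ℝ := fun w => (w.2.1 ^ 2 + w.2.2 ^ 2) * F₁ w with hWF₁def
  set WF₂ : ℝ × ℝ × ℝ → ℝ := fun w => (w.2.1 ^ 2 + w.2.2 ^ 2) * F₂ w with hWF₂def
  set WF₃ : ℝ × ℝ × ℝ → ℝ := fun w => (w.2.1 ^ 2 + w.2.2 ^ 2) * F₃ w with hWF₃def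
  set Yf : ℝ × ℝ × ℝ → ℝ := fun w => w.2.1 * f w with hYfdef
  set Zf : ℝ × ℝ × ℝ → ℝ := fun w => w.2.2 * f w with hZfdef
  have hWfc : ContDiff ℝ (⊤ : ℕ∞) Wf := by rw [hWfdef]; exact hWc3.mul hf
  have hWfs : HasCompactSupport Wf := by rw [hWfdef]; exact ChuAux.cs_mul hsupp
  have hWF₁c : ContDiff ℝ (⊤ : ℕ∞) WF₁ := by rw [hWF₁def]; exact hWc3.mul hF₁c
  have hWF₁s : HasCompactSupport WF₁ := by rw [hWF₁def]; exact ChuAux.cs_mul hF₁s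
  have hWF₂c : ContDiff ℝ (⊤ : ℕ∞) WF₂ := by rw [hWF₂def]; exact hWc3.mul hF₂c
  have hWF₂s : HasCompactSupport WF₂ := by rw [hWF₂def]; exact ChuAux.cs_mul hF₂s
  have hWF₂d : Differentiable ℝ WF₂ := hWF₂c.differentiable (by simp)
  have hWF₃c : ContDiff ℝ (⊤ : ℕ∞) WF₃ := by rw [hWF₃def]; exact hWc3.mul hF₃c
  have hWF₃s : HasCompactSupport WF₃ := by rw [hWF₃def]; exact ChuAux.cs_mul hF₃s
  have hWF₃d : Differentiable ℝ WF₃ := hWF₃c.differentiable (by simp)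
  have hYfc : ContDiff ℝ (⊤ : ℕ∞) Yf := by
    rw [hYfdef]; exact (contDiff_fst.comp contDiff_snd).mul hf
  have hYfs : HasCompactSupport Yf := by rw [hYfdef]; exact ChuAux.cs_mul hsupp
  have hYfd : Differentiable ℝ Yf := hYfc.differentiable (by simp)
  have hZfc : ContDiff ℝ (⊤ : ℕ∞) Zf := by
    rw [hZfdef]; exact (contDiff_snd.comp contDiff_snd).mul hf
  have hZfs : HasCompactSupport Zf := by rw [hZfdef]; exact ChuAux.cs_mul hsupp
  have hZfd : Differentiable ℝ Zf := hZfc.differentiable (by simp)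
  -- derivative of g₂
  have hg₂eq : (fun t : ℝ => ∫ p : ℝ × ℝ, Wf (t, p.1, p.2)) = g₂ := by
    funext t
    rw [hg₂ t, hWfdef]
  have hg₂' : ∀ t : ℝ,
      HasDerivAt g₂ (∫ p : ℝ × ℝ, (p.1 ^ 2 + p.2 ^ 2) * D1 f (t, p.1, p.2)) t := by
    intro t
    have h := ChuAux.hasDerivAt_marginal hWfc hWfs t
    rw [hg₂eq] at h
    have he : (∫ p : ℝ × ℝ, D1 Wf (t, p.1, p.2))
        = ∫ p : ℝ × ℝ, (p.1 ^ 2 + p.2 ^ 2) * D1 f (t, p.1, p.2) := by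
      congr 1
      funext p
      rw [hWfdef]
      exact ChuAux.D1_W_mul' f t p.1 p.2
    rw [he] at h
    exact h
  have hderivg₂ : ∀ t : ℝ,
      deriv g₂ t = ∫ p : ℝ × ℝ, (p.1 ^ 2 + p.2 ^ 2) * D1 f (t, p.1, p.2) :=
    fun t => (hg₂' t).deriv
  -- Term A
  have hTA : (∫ p : ℝ × ℝ, (p.1 ^ 2 + p.2 ^ 2) * D1 F₁ (s, p.1, p.2))
      = deriv (fun t => (t - u) * g₂ t + θ * deriv g₂ t) s := by
    have hM := ChuAux.hasDerivAt_marginal hWF₁c hWF₁s s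
    have hMeq : (fun t : ℝ => ∫ p : ℝ × ℝ, WF₁ (t, p.1, p.2))
        = fun t => (t - u) * g₂ t + θ * deriv g₂ t := by
      funext t
      have e1 : (fun p : ℝ × ℝ => WF₁ (t, p.1, p.2))
          = fun p => (t - u) * ((p.1 ^ 2 + p.2 ^ 2) * f (t, p.1, p.2))
            + θ * ((p.1 ^ 2 + p.2 ^ 2) * D1 f (t, p.1, p.2)) := by
        funext p
        simp only [hWF₁def, hF₁def]
        ring
      rw [e1, integral_add ((ChuAux.int_wt hWc hfc hsupp t).const_mul _)
        ((ChuAux.int_wt hWc hD1fc.continuous hD1fs t).const_mul _),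
        integral_const_mul _ _, integral_const_mul _ _, ← hg₂ t, ← hderivg₂ t]
    rw [hMeq] at hM
    have he : (∫ p : ℝ × ℝ, D1 WF₁ (s, p.1, p.2))
        = ∫ p : ℝ × ℝ, (p.1 ^ 2 + p.2 ^ 2) * D1 F₁ (s, p.1, p.2) := by
      congr 1
      funext p
      rw [hWF₁def]
      exact ChuAux.D1_W_mul' F₁ s p.1 p.2
    rw [he] at hM
    exact hM.deriv.symm
  -- transverse moment integral of y * D2 f
  have hyD2 : (∫ p : ℝ × ℝ, p.1 * D2 f (s, p.1, p.2)) = -g₁ s := by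
    have e3 : ∀ p : ℝ × ℝ, p.1 * D2 f (s, p.1, p.2)
        = D2 Yf (s, p.1, p.2) - f (s, p.1, p.2) := by
      intro p
      rw [hYfdef, ChuAux.D2_y_mul' hfd s p.1 p.2]
      ring
    have i1 : Integrable (fun p : ℝ × ℝ => D2 Yf (s, p.1, p.2)) :=
      ChuAux.slice_int (ChuAux.contDiff_D2 hYfc).continuous (ChuAux.cs_D2 hYfd hYfs) s
    have i2 : Integrable (fun p : ℝ × ℝ => f (s, p.1, p.2)) := ChuAux.slice_int hfc hsupp s
    calc (∫ p : ℝ × ℝ, p.1 * D2 f (s, p.1, p.2))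
        = ∫ p : ℝ × ℝ, (D2 Yf (s, p.1, p.2) - f (s, p.1, p.2)) := by simp only [e3]
      _ = (∫ p : ℝ × ℝ, D2 Yf (s, p.1, p.2)) - ∫ p : ℝ × ℝ, f (s, p.1, p.2) :=
          integral_sub i1 i2
      _ = -g₁ s := by rw [ChuAux.integral_D2_zero hYfc hYfs s, hg₁ s, zero_sub]
  have hzD3 : (∫ p : ℝ × ℝ, p.2 * D3 f (s, p.1, p.2)) = -g₁ s := by
    have e3 : ∀ p : ℝ × ℝ, p.2 * D3 f (s, p.1, p.2)
        = D3 Zf (s, p.1, p.2) - f (s, p.1, p.2) := by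
      intro p
      rw [hZfdef, ChuAux.D3_z_mul' hfd s p.1 p.2]
      ring
    have i1 : Integrable (fun p : ℝ × ℝ => D3 Zf (s, p.1, p.2)) :=
      ChuAux.slice_int (ChuAux.contDiff_D3 hZfc).continuous (ChuAux.cs_D3 hZfd hZfs) s
    have i2 : Integrable (fun p : ℝ × ℝ => f (s, p.1, p.2)) := ChuAux.slice_int hfc hsupp s
    calc (∫ p : ℝ × ℝ, p.2 * D3 f (s, p.1, p.2))
        = ∫ p : ℝ × ℝ, (D3 Zf (s, p.1, p.2) - f (s, p.1, p.2)) := by simp only [e3]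
      _ = (∫ p : ℝ × ℝ, D3 Zf (s, p.1, p.2)) - ∫ p : ℝ × ℝ, f (s, p.1, p.2) :=
          integral_sub i1 i2
      _ = -g₁ s := by rw [ChuAux.integral_D3_zero hZfc hZfs s, hg₁ s, zero_sub]
  -- Term B
  have hTB : (∫ p : ℝ × ℝ, (p.1 ^ 2 + p.2 ^ 2) * D2 F₂ (s, p.1, p.2))
      = -2 * (∫ p : ℝ × ℝ, p.1 ^ 2 * f (s, p.1, p.2)) + 2 * θ * g₁ s := by
    have e : ∀ p : ℝ × ℝ, (p.1 ^ 2 + p.2 ^ 2) * D2 F₂ (s, p.1, p.2)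
        = D2 WF₂ (s, p.1, p.2) - 2 * p.1 * F₂ (s, p.1, p.2) := by
      intro p
      rw [hWF₂def, ChuAux.D2_W_mul' hF₂d s p.1 p.2]
      ring
    have i1 : Integrable (fun p : ℝ × ℝ => D2 WF₂ (s, p.1, p.2)) :=
      ChuAux.slice_int (ChuAux.contDiff_D2 hWF₂c).continuous (ChuAux.cs_D2 hWF₂d hWF₂s) s
    have i2 : Integrable (fun p : ℝ × ℝ => (2 * p.1) * F₂ (s, p.1, p.2)) :=
      ChuAux.int_wt (by fun_prop) hF₂c.continuous hF₂s s
    have e2 : ∀ p : ℝ × ℝ, (2 * p.1) * F₂ (s, p.1, p.2)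
        = 2 * (p.1 ^ 2 * f (s, p.1, p.2)) + (2 * θ) * (p.1 * D2 f (s, p.1, p.2)) := by
      intro p
      simp only [hF₂def]
      ring
    have i3 : Integrable (fun p : ℝ × ℝ => p.1 ^ 2 * f (s, p.1, p.2)) :=
      ChuAux.int_wt (by fun_prop) hfc hsupp s
    have i4 : Integrable (fun p : ℝ × ℝ => p.1 * D2 f (s, p.1, p.2)) :=
      ChuAux.int_wt (by fun_prop) hD2fc.continuous hD2fs s
    have hI2 : (∫ p : ℝ × ℝ, (2 * p.1) * F₂ (s, p.1, p.2))
        = 2 * (∫ p : ℝ × ℝ, p.1 ^ 2 * f (s, p.1, p.2)) + (2 * θ) * (-g₁ s) := by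
      calc (∫ p : ℝ × ℝ, (2 * p.1) * F₂ (s, p.1, p.2))
          = ∫ p : ℝ × ℝ, (2 * (p.1 ^ 2 * f (s, p.1, p.2))
              + (2 * θ) * (p.1 * D2 f (s, p.1, p.2))) := by simp only [e2]
        _ = 2 * (∫ p : ℝ × ℝ, p.1 ^ 2 * f (s, p.1, p.2))
              + (2 * θ) * (∫ p : ℝ × ℝ, p.1 * D2 f (s, p.1, p.2)) := by
            rw [integral_add (i3.const_mul _) (i4.const_mul _),
              integral_const_mul _ _, integral_const_mul _ _]
        _ = 2 * (∫ p : ℝ × ℝ, p.1 ^ 2 * f (s, p.1, p.2)) + (2 * θ) * (-g₁ s) := by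
            rw [hyD2]
    calc (∫ p : ℝ × ℝ, (p.1 ^ 2 + p.2 ^ 2) * D2 F₂ (s, p.1, p.2))
        = ∫ p : ℝ × ℝ, (D2 WF₂ (s, p.1, p.2) - (2 * p.1) * F₂ (s, p.1, p.2)) := by
          simp only [e]
      _ = (∫ p : ℝ × ℝ, D2 WF₂ (s, p.1, p.2))
            - ∫ p : ℝ × ℝ, (2 * p.1) * F₂ (s, p.1, p.2) := integral_sub i1 i2
      _ = -2 * (∫ p : ℝ × ℝ, p.1 ^ 2 * f (s, p.1, p.2)) + 2 * θ * g₁ s := by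
          rw [ChuAux.integral_D2_zero hWF₂c hWF₂s s, hI2]
          ring
  -- Term C
  have hTC : (∫ p : ℝ × ℝ, (p.1 ^ 2 + p.2 ^ 2) * D3 F₃ (s, p.1, p.2))
      = -2 * (∫ p : ℝ × ℝ, p.2 ^ 2 * f (s, p.1, p.2)) + 2 * θ * g₁ s := by
    have e : ∀ p : ℝ × ℝ, (p.1 ^ 2 + p.2 ^ 2) * D3 F₃ (s, p.1, p.2)
        = D3 WF₃ (s, p.1, p.2) - 2 * p.2 * F₃ (s, p.1, p.2) := by
      intro p
      rw [hWF₃def, ChuAux.D3_W_mul' hF₃d s p.1 p.2]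
      ring
    have i1 : Integrable (fun p : ℝ × ℝ => D3 WF₃ (s, p.1, p.2)) :=
      ChuAux.slice_int (ChuAux.contDiff_D3 hWF₃c).continuous (ChuAux.cs_D3 hWF₃d hWF₃s) s
    have i2 : Integrable (fun p : ℝ × ℝ => (2 * p.2) * F₃ (s, p.1, p.2)) :=
      ChuAux.int_wt (by fun_prop) hF₃c.continuous hF₃s s
    have e2 : ∀ p : ℝ × ℝ, (2 * p.2) * F₃ (s, p.1, p.2)
        = 2 * (p.2 ^ 2 * f (s, p.1, p.2)) + (2 * θ) * (p.2 * D3 f (s, p.1, p.2)) := by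
      intro p
      simp only [hF₃def]
      ring
    have i3 : Integrable (fun p : ℝ × ℝ => p.2 ^ 2 * f (s, p.1, p.2)) :=
      ChuAux.int_wt (by fun_prop) hfc hsupp s
    have i4 : Integrable (fun p : ℝ × ℝ => p.2 * D3 f (s, p.1, p.2)) :=
      ChuAux.int_wt (by fun_prop) hD3fc.continuous hD3fs s
    have hI2 : (∫ p : ℝ × ℝ, (2 * p.2) * F₃ (s, p.1, p.2))
        = 2 * (∫ p : ℝ × ℝ, p.2 ^ 2 * f (s, p.1, p.2)) + (2 * θ) * (-g₁ s) := by
      calc (∫ p : ℝ × ℝ, (2 * p.2) * F₃ (s, p.1, p.2))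
          = ∫ p : ℝ × ℝ, (2 * (p.2 ^ 2 * f (s, p.1, p.2))
              + (2 * θ) * (p.2 * D3 f (s, p.1, p.2))) := by simp only [e2]
        _ = 2 * (∫ p : ℝ × ℝ, p.2 ^ 2 * f (s, p.1, p.2))
              + (2 * θ) * (∫ p : ℝ × ℝ, p.2 * D3 f (s, p.1, p.2)) := by
            rw [integral_add (i3.const_mul _) (i4.const_mul _),
              integral_const_mul _ _, integral_const_mul _ _]
        _ = 2 * (∫ p : ℝ × ℝ, p.2 ^ 2 * f (s, p.1, p.2)) + (2 * θ) * (-g₁ s) := by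
            rw [hzD3]
    calc (∫ p : ℝ × ℝ, (p.1 ^ 2 + p.2 ^ 2) * D3 F₃ (s, p.1, p.2))
        = ∫ p : ℝ × ℝ, (D3 WF₃ (s, p.1, p.2) - (2 * p.2) * F₃ (s, p.1, p.2)) := by
          simp only [e]
      _ = (∫ p : ℝ × ℝ, D3 WF₃ (s, p.1, p.2))
            - ∫ p : ℝ × ℝ, (2 * p.2) * F₃ (s, p.1, p.2) := integral_sub i1 i2
      _ = -2 * (∫ p : ℝ × ℝ, p.2 ^ 2 * f (s, p.1, p.2)) + 2 * θ * g₁ s := by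
          rw [ChuAux.integral_D3_zero hWF₃c hWF₃s s, hI2]
          ring
  -- recombining the two transverse moments
  have i3 : Integrable (fun p : ℝ × ℝ => p.1 ^ 2 * f (s, p.1, p.2)) :=
    ChuAux.int_wt (by fun_prop) hfc hsupp s
  have i4 : Integrable (fun p : ℝ × ℝ => p.2 ^ 2 * f (s, p.1, p.2)) :=
    ChuAux.int_wt (by fun_prop) hfc hsupp s
  have hsum : (∫ p : ℝ × ℝ, p.1 ^ 2 * f (s, p.1, p.2))
      + (∫ p : ℝ × ℝ, p.2 ^ 2 * f (s, p.1, p.2)) = g₂ s := by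
    rw [← integral_add i3 i4, hg₂ s]
    congr 1
    funext p
    ring
  -- split the integral
  have iA : Integrable (fun p : ℝ × ℝ => (p.1 ^ 2 + p.2 ^ 2) * D1 F₁ (s, p.1, p.2)) :=
    ChuAux.int_wt hWc (ChuAux.contDiff_D1 hF₁c).continuous (ChuAux.cs_D1 hF₁d hF₁s) s
  have iB : Integrable (fun p : ℝ × ℝ => (p.1 ^ 2 + p.2 ^ 2) * D2 F₂ (s, p.1, p.2)) :=
    ChuAux.int_wt hWc (ChuAux.contDiff_D2 hF₂c).continuous (ChuAux.cs_D2 hF₂d hF₂s) s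
  have iC : Integrable (fun p : ℝ × ℝ => (p.1 ^ 2 + p.2 ^ 2) * D3 F₃ (s, p.1, p.2)) :=
    ChuAux.int_wt hWc (ChuAux.contDiff_D3 hF₃c).continuous (ChuAux.cs_D3 hF₃d hF₃s) s
  have hsplit : ∀ p : ℝ × ℝ, (p.1 ^ 2 + p.2 ^ 2) * lbDiv f u θ (s, p.1, p.2)
      = (p.1 ^ 2 + p.2 ^ 2) * D1 F₁ (s, p.1, p.2)
        + ((p.1 ^ 2 + p.2 ^ 2) * D2 F₂ (s, p.1, p.2)
          + (p.1 ^ 2 + p.2 ^ 2) * D3 F₃ (s, p.1, p.2)) := by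
    intro p
    have hl : lbDiv f u θ (s, p.1, p.2)
        = D1 F₁ (s, p.1, p.2) + D2 F₂ (s, p.1, p.2) + D3 F₃ (s, p.1, p.2) := by
      rw [hF₁def, hF₂def, hF₃def]; rfl
    rw [hl]; ring
  calc (∫ p : ℝ × ℝ, (p.1 ^ 2 + p.2 ^ 2) * lbDiv f u θ (s, p.1, p.2))
      = ∫ p : ℝ × ℝ, ((p.1 ^ 2 + p.2 ^ 2) * D1 F₁ (s, p.1, p.2)
        + ((p.1 ^ 2 + p.2 ^ 2) * D2 F₂ (s, p.1, p.2)
          + (p.1 ^ 2 + p.2 ^ 2) * D3 F₃ (s, p.1, p.2))) := by simp only [hsplit]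
    _ = (∫ p : ℝ × ℝ, (p.1 ^ 2 + p.2 ^ 2) * D1 F₁ (s, p.1, p.2))
        + ((∫ p : ℝ × ℝ, (p.1 ^ 2 + p.2 ^ 2) * D2 F₂ (s, p.1, p.2))
          + (∫ p : ℝ × ℝ, (p.1 ^ 2 + p.2 ^ 2) * D3 F₃ (s, p.1, p.2))) := by
        have h1 : Integrable (fun p : ℝ × ℝ => (p.1 ^ 2 + p.2 ^ 2) * D2 F₂ (s, p.1, p.2)
            + (p.1 ^ 2 + p.2 ^ 2) * D3 F₃ (s, p.1, p.2)) := iB.add iC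
        rw [integral_add iA h1, integral_add iB iC]
    _ = deriv (fun t => (t - u) * g₂ t + θ * deriv g₂ t) s + 4 * θ * g₁ s - 2 * g₂ s := by
        rw [hTA, hTB, hTC]
        linarith [hsum]
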